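/- arXiv:1609.08571 — 2 statements merged into one kernel-verified Lean document; each statement's English description precedes it below -/
import Mathlib

section
/- Let P and Q be orthogonal projections on ℂ^d, let U be a unitary d×d complex matrix, and suppose there exists 0 ≤ ε < 1 such that |⟨η, Uξ⟩|² ≤ ε for all unit vectors ξ ∈ ker P and η ∈ ker Q. Then the positive semidefinite matrix P + U^† Q U has trivial kernel, i.e. it is positive definite and in particular has full rank d. -/
/-!
Both summands are positive semidefinite, so a vector in the kernel of `P + UᴴQU` lies in
`ker P` and is mapped by `U` into `ker Q`. Normalised, such a vector `ξ` together with `η = Uξ`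
would have acceptance `|⟨η, Uξ⟩|² = 1 > ε`; hence the kernel is trivial, and a positive
semidefinite matrix with trivial kernel is invertible, hence positive definite.
-/

open Matrix ComplexOrder

namespace Matrix

variable {n 𝕜 : Type*} [Fintype n] [RCLike 𝕜]

theorem posSemidef_of_isHermitian_of_mul_self_eq {P : Matrix n n 𝕜} (hP : P.IsHermitian)
    (hP2 : P * P = P) : P.PosSemidef := by
  simpa only [hP.eq, hP2] using posSemidef_conjTranspose_mul_self P

theorem PosSemidef.mulVec_eq_zero_of_add_mulVec_eq_zero {A B : Matrix n n 𝕜}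
    (hA : A.PosSemidef) (hB : B.PosSemidef) {v : n → 𝕜} (hv : (A + B) *ᵥ v = 0) :
    A *ᵥ v = 0 ∧ B *ᵥ v = 0 := by
  have hsum : star v ⬝ᵥ A *ᵥ v + star v ⬝ᵥ B *ᵥ v = 0 := by
    rw [← dotProduct_add, ← add_mulVec, hv, dotProduct_zero]
  obtain ⟨hAv, hBv⟩ := (add_eq_zero_iff_of_nonneg (hA.dotProduct_mulVec_nonneg v)
    (hB.dotProduct_mulVec_nonneg v)).mp hsum
  exact ⟨(hA.dotProduct_mulVec_zero_iff v).mp hAv, (hB.dotProduct_mulVec_zero_iff v).mp hBv⟩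

theorem exists_smul_dotProduct_star_self_eq_one {v : n → 𝕜} (hv : v ≠ 0) :
    ∃ c : 𝕜, star (c • v) ⬝ᵥ c • v = 1 := by
  obtain ⟨r, hr, hrv⟩ := RCLike.pos_iff_exists_ofReal.mp (dotProduct_star_self_pos_iff.mpr hv)
  refine ⟨((√r)⁻¹ : ℝ), ?_⟩
  rw [star_smul, smul_dotProduct, dotProduct_smul, ← hrv, RCLike.star_def, RCLike.conj_ofReal]
  simp only [smul_eq_mul]
  norm_cast
  field_simp
  rw [Real.sq_sqrt hr.le]

theorem dotProduct_star_unitary_mulVec [DecidableEq n] {U : Matrix n n 𝕜}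
    (hU : U ∈ unitaryGroup n 𝕜) (v w : n → 𝕜) : star (U *ᵥ v) ⬝ᵥ U *ᵥ w = star v ⬝ᵥ w := by
  rw [star_mulVec, dotProduct_mulVec, vecMul_vecMul, ← star_eq_conjTranspose,
    (mem_unitaryGroup_iff'.mp hU), vecMul_one]

theorem eq_zero_of_mulVec_eq_zero_of_unitary_mulVec_eq_zero [DecidableEq n]
    {P Q U : Matrix n n 𝕜} (hU : U ∈ unitaryGroup n 𝕜) {ε : ℝ} (hε1 : ε < 1)
    (hacc : ∀ ξ η : n → 𝕜, P *ᵥ ξ = 0 → Q *ᵥ η = 0 → star ξ ⬝ᵥ ξ = 1 → star η ⬝ᵥ η = 1 →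
      ‖star η ⬝ᵥ U *ᵥ ξ‖ ^ 2 ≤ ε)
    {v : n → 𝕜} (hPv : P *ᵥ v = 0) (hQUv : Q *ᵥ U *ᵥ v = 0) : v = 0 := by
  by_contra hv
  obtain ⟨c, hc⟩ := exists_smul_dotProduct_star_self_eq_one hv
  have hUc : star (U *ᵥ c • v) ⬝ᵥ U *ᵥ c • v = 1 := by
    rw [dotProduct_star_unitary_mulVec hU, hc]
  have h := hacc (c • v) (U *ᵥ c • v) (by rw [mulVec_smul, hPv, smul_zero])
    (by rw [mulVec_smul, mulVec_smul, hQUv, smul_zero]) hc hUc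
  rw [hUc, norm_one, one_pow] at h
  linarith

end Matrix

theorem stmt17_general (d : ℕ) (P Q : Matrix (Fin d) (Fin d) ℂ)
    (hP : P.IsHermitian) (hP2 : P * P = P)
    (hQ : Q.IsHermitian) (hQ2 : Q * Q = Q)
    (U : Matrix (Fin d) (Fin d) ℂ) (hU : U ∈ Matrix.unitaryGroup (Fin d) ℂ)
    (ε : ℝ) (hε1 : ε < 1)
    (hacc : ∀ ξ η : Fin d → ℂ, P.mulVec ξ = 0 → Q.mulVec η = 0 →
      star ξ ⬝ᵥ ξ = 1 → star η ⬝ᵥ η = 1 →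
      ‖star η ⬝ᵥ U.mulVec ξ‖ ^ 2 ≤ ε) :
    (∀ v : Fin d → ℂ, (P + Uᴴ * Q * U).mulVec v = 0 → v = 0) ∧
    (P + Uᴴ * Q * U).PosDef ∧
    (P + Uᴴ * Q * U).rank = d := by
  have hPpsd := posSemidef_of_isHermitian_of_mul_self_eq hP hP2
  have hUQUpsd := (posSemidef_of_isHermitian_of_mul_self_eq hQ hQ2).conjTranspose_mul_mul_same U
  have hker : ∀ v, (P + Uᴴ * Q * U) *ᵥ v = 0 → v = 0 := by
    intro v hv
    obtain ⟨hPv, hUQUv⟩ := hPpsd.mulVec_eq_zero_of_add_mulVec_eq_zero hUQUpsd hv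
    have hQUv : Q *ᵥ U *ᵥ v = 0 := by
      rw [mulVec_mulVec, ← Matrix.one_mul Q, ← mem_unitaryGroup_iff.mp hU, Matrix.mul_assoc,
        Matrix.mul_assoc, ← mulVec_mulVec, ← Matrix.mul_assoc, star_eq_conjTranspose, hUQUv,
        mulVec_zero]
    exact eq_zero_of_mulVec_eq_zero_of_unitary_mulVec_eq_zero hU hε1 hacc hPv hQUv
  have hunit : IsUnit (P + Uᴴ * Q * U) :=
    mulVec_injective_iff_isUnit.mp <| (injective_iff_map_eq_zero (mulVecLin _)).mpr hker
  exact ⟨hker, (hPpsd.add hUQUpsd).posDef_iff_isUnit.mpr hunit,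
    by simpa using (P + Uᴴ * Q * U).rank_of_isUnit hunit⟩

theorem stmt17 (d : ℕ) (P Q : Matrix (Fin d) (Fin d) ℂ)
    (hP : P.IsHermitian) (hP2 : P * P = P)
    (hQ : Q.IsHermitian) (hQ2 : Q * Q = Q)
    (U : Matrix (Fin d) (Fin d) ℂ) (hU : U ∈ Matrix.unitaryGroup (Fin d) ℂ)
    (ε : ℝ) (hε0 : 0 ≤ ε) (hε1 : ε < 1)
    (hacc : ∀ ξ η : Fin d → ℂ, P.mulVec ξ = 0 → Q.mulVec η = 0 →
      star ξ ⬝ᵥ ξ = 1 → star η ⬝ᵥ η = 1 →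
      ‖star η ⬝ᵥ U.mulVec ξ‖ ^ 2 ≤ ε) :
    (∀ v : Fin d → ℂ, (P + Uᴴ * Q * U).mulVec v = 0 → v = 0) ∧
    (P + Uᴴ * Q * U).PosDef ∧
    (P + Uᴴ * Q * U).rank = d :=
  stmt17_general d P Q hP hP2 hQ hQ2 U hU ε hε1 hacc
end

section
/- Let E be a finite-dimensional complex inner product space and let P₀ and P₁ be orthogonal projections on E. Then there exists a finite family (E_i) of nonzero, pairwise orthogonal subspaces of E whose direct sum is all of E, such that each E_i has dimension at most 2, each E_i is invariant under both P₀ and P₁ (i.e. P_j(E_i) ⊆ E_i for j = 0,1), and for every i and j ∈ {0,1} the rank of the restriction of P_j to E_i is at most 1 (i.e. dim P_j(E_i) ≤ 1). -/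
open Module


lemma finrank_span_single_le {E : Type*} [NormedAddCommGroup E] [InnerProductSpace ℂ E]
    (x : E) : finrank ℂ (Submodule.span ℂ {x}) ≤ 1 := by
  by_cases hx : x = 0
  · subst hx; rw [Submodule.span_zero_singleton]; simp [finrank_bot]
  · rw [finrank_span_singleton hx]

lemma case_one {E : Type*} [NormedAddCommGroup E] [InnerProductSpace ℂ E]
    [FiniteDimensional ℂ E] (P Q : E →ₗ[ℂ] E)
    (hP : P ∘ₗ P = P) (hQ : Q ∘ₗ Q = Q) (hr : LinearMap.range P ≠ ⊥) :
    ∃ V : Submodule ℂ E, V ≠ ⊥ ∧ finrank ℂ V ≤ 2 ∧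
      V.map P ≤ V ∧ V.map Q ≤ V ∧
      finrank ℂ (V.map P) ≤ 1 ∧ finrank ℂ (V.map Q) ≤ 1 := by
  classical
  haveI : Nontrivial (LinearMap.range P) := Submodule.nontrivial_iff_ne_bot.mpr hr
  have hinv : ∀ x ∈ LinearMap.range P, (P ∘ₗ Q) x ∈ LinearMap.range P :=
    fun x _ => ⟨Q x, rfl⟩
  obtain ⟨μ, hμ⟩ := Module.End.exists_eigenvalue ((P ∘ₗ Q).restrict hinv)
  obtain ⟨v₀, hv₀⟩ := hμ.exists_hasEigenvector
  have hvne : (v₀ : E) ≠ 0 := fun h => hv₀.2 (Subtype.ext h)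
  have hPv : P (v₀ : E) = (v₀ : E) := by
    obtain ⟨w, hw⟩ := v₀.2
    rw [← hw, ← LinearMap.comp_apply, hP]
  have hPQv : P (Q (v₀ : E)) = μ • (v₀ : E) := by
    have := congrArg (Subtype.val) hv₀.apply_eq_smul
    simpa [LinearMap.restrict_coe_apply] using this
  have hQQ : Q (Q (v₀ : E)) = Q (v₀ : E) := by rw [← LinearMap.comp_apply, hQ]
  set v : E := (v₀ : E)
  have hmem : v ∈ Submodule.span ℂ ({v, Q v} : Set E) :=
    Submodule.subset_span (by simp)
  refine ⟨Submodule.span ℂ {v, Q v}, ?_, ?_, ?_, ?_, ?_, ?_⟩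
  · exact Submodule.ne_bot_iff _ |>.mpr ⟨v, hmem, hvne⟩
  · have hset : ({v, Q v} : Set E) = (({v, Q v} : Finset E) : Set E) := by simp
    rw [hset]
    exact (finrank_span_finset_le_card _).trans
      ((Finset.card_insert_le _ _).trans (by simp))
  · rw [Submodule.map_span, Submodule.span_le]
    rintro x ⟨y, hy, rfl⟩
    rcases hy with rfl | rfl
    · rw [hPv]; exact hmem
    · rw [hPQv]; exact Submodule.smul_mem _ _ hmem
  · rw [Submodule.map_span, Submodule.span_le]
    rintro x ⟨y, hy, rfl⟩
    rcases hy with rfl | rfl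
    · exact Submodule.subset_span (by simp)
    · rw [hQQ]; exact Submodule.subset_span (by simp)
  · have h1 : (Submodule.span ℂ {v, Q v}).map P ≤ Submodule.span ℂ {v} := by
      rw [Submodule.map_span, Submodule.span_le]
      rintro x ⟨y, hy, rfl⟩
      rcases hy with rfl | rfl
      · rw [hPv]; exact Submodule.subset_span rfl
      · rw [hPQv]; exact Submodule.smul_mem _ _ (Submodule.subset_span rfl)
    exact (Submodule.finrank_mono h1).trans (finrank_span_single_le v)
  · have h1 : (Submodule.span ℂ {v, Q v}).map Q ≤ Submodule.span ℂ {Q v} := by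
      rw [Submodule.map_span, Submodule.span_le]
      rintro x ⟨y, hy, rfl⟩
      rcases hy with rfl | rfl
      · exact Submodule.subset_span rfl
      · rw [hQQ]; exact Submodule.subset_span rfl
    exact (Submodule.finrank_mono h1).trans (finrank_span_single_le (Q v))


lemma trivial_case {E : Type*} [NormedAddCommGroup E] [InnerProductSpace ℂ E]
    [FiniteDimensional ℂ E] (h : finrank ℂ E = 0) (P₀ P₁ : E →ₗ[ℂ] E) :
    ∃ (m : ℕ) (V : Fin m → Submodule ℂ E),
      (∀ i, V i ≠ ⊥) ∧
      (∀ i j, i ≠ j → ∀ x ∈ V i, ∀ y ∈ V j, inner (𝕜 := ℂ) x y = 0) ∧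
      (⨆ i, V i) = ⊤ ∧
      (∀ i, Module.finrank ℂ (V i) ≤ 2) ∧
      (∀ i, (V i).map P₀ ≤ V i ∧ (V i).map P₁ ≤ V i) ∧
      (∀ i, Module.finrank ℂ ((V i).map P₀) ≤ 1 ∧
            Module.finrank ℂ ((V i).map P₁) ≤ 1) := by
  haveI : Subsingleton E := finrank_zero_iff.mp h
  exact ⟨0, Fin.elim0, fun i => i.elim0, fun i => i.elim0,
    Subsingleton.elim _ _, fun i => i.elim0, fun i => i.elim0, fun i => i.elim0⟩

lemma exists_good' {E : Type*} [NormedAddCommGroup E] [InnerProductSpace ℂ E]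
    [FiniteDimensional ℂ E] [Nontrivial E] (P Q : E →ₗ[ℂ] E)
    (hP : P ∘ₗ P = P) (hQ : Q ∘ₗ Q = Q) :
    ∃ V : Submodule ℂ E, V ≠ ⊥ ∧ finrank ℂ V ≤ 2 ∧
      V.map P ≤ V ∧ V.map Q ≤ V ∧
      finrank ℂ (V.map P) ≤ 1 ∧ finrank ℂ (V.map Q) ≤ 1 := by
  by_cases hrP : LinearMap.range P = ⊥
  · by_cases hrQ : LinearMap.range Q = ⊥
    · obtain ⟨v, hv⟩ := exists_ne (0 : E)
      have hP0 : P = 0 := LinearMap.range_eq_bot.mp hrP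
      have hQ0 : Q = 0 := LinearMap.range_eq_bot.mp hrQ
      have hbotP : (Submodule.span ℂ {v}).map P = ⊥ := by
        rw [hP0]; exact Submodule.map_zero _
      have hbotQ : (Submodule.span ℂ {v}).map Q = ⊥ := by
        rw [hQ0]; exact Submodule.map_zero _
      refine ⟨Submodule.span ℂ {v}, ?_, ?_, ?_, ?_, ?_, ?_⟩
      · simp [Submodule.span_singleton_eq_bot, hv]
      · rw [finrank_span_singleton hv]; omega
      · rw [hbotP]; exact bot_le
      · rw [hbotQ]; exact bot_le
      · rw [hbotP]; simp [finrank_bot]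
      · rw [hbotQ]; simp [finrank_bot]
    · obtain ⟨V, h1, h2, h3, h4, h5, h6⟩ := case_one Q P hQ hP hrQ
      exact ⟨V, h1, h2, h4, h3, h6, h5⟩
  · exact case_one P Q hP hQ hrP

lemma jordan_main (n : ℕ) : ∀ (E : Type u) [NormedAddCommGroup E] [InnerProductSpace ℂ E]
    [FiniteDimensional ℂ E], finrank ℂ E ≤ n →
    ∀ (P₀ P₁ : E →ₗ[ℂ] E), P₀ ∘ₗ P₀ = P₀ → LinearMap.IsSymmetric P₀ →
      P₁ ∘ₗ P₁ = P₁ → LinearMap.IsSymmetric P₁ →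
    ∃ (m : ℕ) (V : Fin m → Submodule ℂ E),
      (∀ i, V i ≠ ⊥) ∧
      (∀ i j, i ≠ j → ∀ x ∈ V i, ∀ y ∈ V j, inner (𝕜 := ℂ) x y = 0) ∧
      (⨆ i, V i) = ⊤ ∧
      (∀ i, Module.finrank ℂ (V i) ≤ 2) ∧
      (∀ i, (V i).map P₀ ≤ V i ∧ (V i).map P₁ ≤ V i) ∧
      (∀ i, Module.finrank ℂ ((V i).map P₀) ≤ 1 ∧
            Module.finrank ℂ ((V i).map P₁) ≤ 1) := by
  induction n with
  | zero =>
    intro E _ _ _ hdim P₀ P₁ _ _ _ _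
    exact trivial_case (Nat.le_zero.mp hdim) P₀ P₁
  | succ n ih =>
    intro E _ _ _ hdim P₀ P₁ hP₀proj hP₀sym hP₁proj hP₁sym
    by_cases h0 : finrank ℂ E = 0
    · exact trivial_case h0 P₀ P₁
    haveI : Nontrivial E := finrank_pos_iff.mp (Nat.pos_of_ne_zero h0)
    obtain ⟨V, hVne, hVdim, hVP₀, hVP₁, hVr₀, hVr₁⟩ := exists_good' P₀ P₁ hP₀proj hP₁proj
    -- the orthogonal complement is invariant
    have hWinv : ∀ (P : E →ₗ[ℂ] E), LinearMap.IsSymmetric P → V.map P ≤ V →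
        ∀ x ∈ Vᗮ, P x ∈ Vᗮ := by
      intro P hsym hinv x hx
      rw [Submodule.mem_orthogonal] at hx ⊢
      intro u hu
      have h1 : P u ∈ V := hinv ⟨u, hu, rfl⟩
      rw [← hsym u x]
      exact hx _ h1
    have hW₀ := hWinv P₀ hP₀sym hVP₀
    have hW₁ := hWinv P₁ hP₁sym hVP₁
    have hQproj : ∀ (P : E →ₗ[ℂ] E), P ∘ₗ P = P → ∀ (h : ∀ x ∈ Vᗮ, P x ∈ Vᗮ),
        (P.restrict h) ∘ₗ (P.restrict h) = P.restrict h := by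
      intro P hproj h
      ext x
      simp only [LinearMap.comp_apply, LinearMap.restrict_coe_apply]
      rw [← LinearMap.comp_apply, hproj]
    have hQsym : ∀ (P : E →ₗ[ℂ] E), LinearMap.IsSymmetric P →
        ∀ (h : ∀ x ∈ Vᗮ, P x ∈ Vᗮ), LinearMap.IsSymmetric (P.restrict h) := by
      intro P hsym h x y
      rw [Submodule.coe_inner, Submodule.coe_inner, LinearMap.restrict_coe_apply,
        LinearMap.restrict_coe_apply]
      exact hsym _ _
    have hVpos : finrank ℂ V ≠ 0 := by rwa [ne_eq, Submodule.finrank_eq_zero]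
    have hWdim : finrank ℂ Vᗮ ≤ n := by
      have := V.finrank_add_finrank_orthogonal
      omega
    obtain ⟨m', V', h'ne, h'orth, h'sup, h'dim, h'inv, h'rank⟩ :=
      ih Vᗮ hWdim (P₀.restrict hW₀) (P₁.restrict hW₁) (hQproj P₀ hP₀proj hW₀)
        (hQsym P₀ hP₀sym hW₀) (hQproj P₁ hP₁proj hW₁) (hQsym P₁ hP₁sym hW₁)
    have hcomm : ∀ (P : E →ₗ[ℂ] E) (h : ∀ x ∈ Vᗮ, P x ∈ Vᗮ) (p : Submodule ℂ Vᗮ),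
        (p.map Vᗮ.subtype).map P = (p.map (P.restrict h)).map Vᗮ.subtype := by
      intro P h p
      have hc : P ∘ₗ Vᗮ.subtype = Vᗮ.subtype ∘ₗ P.restrict h := by
        ext x; simp [LinearMap.restrict_coe_apply]
      rw [← Submodule.map_comp, hc, Submodule.map_comp]
    have hsubW : ∀ (k : Fin m'), (V' k).map Vᗮ.subtype ≤ Vᗮ :=
      fun k => Submodule.map_subtype_le _ _
    refine ⟨m' + 1, Fin.cons V (fun i => (V' i).map Vᗮ.subtype), ?_, ?_, ?_, ?_, ?_, ?_⟩
    · intro i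
      rcases Fin.eq_zero_or_eq_succ i with rfl | ⟨k, rfl⟩
      · rw [Fin.cons_zero]; exact hVne
      · rw [Fin.cons_succ]
        intro hbot
        have := Submodule.map_injective_of_injective Vᗮ.injective_subtype
          (hbot.trans (Submodule.map_bot Vᗮ.subtype).symm)
        exact h'ne k this
    · intro i j hij x hx y hy
      rcases Fin.eq_zero_or_eq_succ i with rfl | ⟨k, rfl⟩ <;>
        rcases Fin.eq_zero_or_eq_succ j with rfl | ⟨l, rfl⟩
      · exact absurd rfl hij
      · rw [Fin.cons_zero] at hx; rw [Fin.cons_succ] at hy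
        exact (Submodule.mem_orthogonal V y).mp (hsubW l hy) x hx
      · rw [Fin.cons_succ] at hx; rw [Fin.cons_zero] at hy
        exact inner_eq_zero_symm.mpr ((Submodule.mem_orthogonal V x).mp (hsubW k hx) y hy)
      · rw [Fin.cons_succ] at hx hy
        obtain ⟨x', hx', rfl⟩ := hx
        obtain ⟨y', hy', rfl⟩ := hy
        have hkl : k ≠ l := fun h => hij (by rw [h])
        exact h'orth k l hkl x' hx' y' hy'
    · rw [eq_top_iff, ← Submodule.isCompl_orthogonal_of_hasOrthogonalProjection (K := V) |>.sup_eq_top]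
      apply sup_le
      · exact le_iSup_of_le 0 (by rw [Fin.cons_zero])
      · have he : Vᗮ = Submodule.map Vᗮ.subtype (⨆ i, V' i) := by
          rw [h'sup, Submodule.map_subtype_top]
        refine he.le.trans ?_
        rw [Submodule.map_iSup]
        exact iSup_le fun k => le_iSup_of_le k.succ (by rw [Fin.cons_succ])
    · intro i
      rcases Fin.eq_zero_or_eq_succ i with rfl | ⟨k, rfl⟩
      · rw [Fin.cons_zero]; exact hVdim
      · rw [Fin.cons_succ, Submodule.finrank_map_subtype_eq]; exact h'dim k
    · intro i
      rcases Fin.eq_zero_or_eq_succ i with rfl | ⟨k, rfl⟩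
      · rw [Fin.cons_zero]; exact ⟨hVP₀, hVP₁⟩
      · rw [Fin.cons_succ]
        constructor
        · rw [hcomm P₀ hW₀]; exact Submodule.map_mono (h'inv k).1
        · rw [hcomm P₁ hW₁]; exact Submodule.map_mono (h'inv k).2
    · intro i
      rcases Fin.eq_zero_or_eq_succ i with rfl | ⟨k, rfl⟩
      · rw [Fin.cons_zero]; exact ⟨hVr₀, hVr₁⟩
      · rw [Fin.cons_succ]
        constructor
        · rw [hcomm P₀ hW₀, Submodule.finrank_map_subtype_eq]; exact (h'rank k).1
        · rw [hcomm P₁ hW₁, Submodule.finrank_map_subtype_eq]; exact (h'rank k).2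

/-- Jordan's lemma on pairs of orthogonal projections. -/
theorem stmt18 (E : Type*) [NormedAddCommGroup E] [InnerProductSpace ℂ E]
    [FiniteDimensional ℂ E]
    (P₀ P₁ : E →ₗ[ℂ] E)
    (hP₀proj : P₀ ∘ₗ P₀ = P₀) (hP₀sym : LinearMap.IsSymmetric P₀)
    (hP₁proj : P₁ ∘ₗ P₁ = P₁) (hP₁sym : LinearMap.IsSymmetric P₁) :
    ∃ (m : ℕ) (V : Fin m → Submodule ℂ E),
      (∀ i, V i ≠ ⊥) ∧
      -- pairwise orthogonal
      (∀ i j, i ≠ j → ∀ x ∈ V i, ∀ y ∈ V j, inner (𝕜 := ℂ) x y = 0) ∧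
      -- the direct sum of the `V i` is all of `E`
      (⨆ i, V i) = ⊤ ∧
      -- each `V i` has dimension at most 2
      (∀ i, Module.finrank ℂ (V i) ≤ 2) ∧
      -- each `V i` is invariant under both projections
      (∀ i, (V i).map P₀ ≤ V i ∧ (V i).map P₁ ≤ V i) ∧
      -- the restriction of each projection to each `V i` has rank at most 1
      (∀ i, Module.finrank ℂ ((V i).map P₀) ≤ 1 ∧
            Module.finrank ℂ ((V i).map P₁) ≤ 1) := by
  exact jordan_main (finrank ℂ E) E le_rfl P₀ P₁ hP₀proj hP₀sym hP₁proj hP₁sym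
end
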